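/- Let A be a nonzero matrix and Q(A) = A - ε. If ‖ε‖_F ≤ c·‖A‖_F and σ_max(ε) ≤ c·σ_max(A) for some 0 ≤ c < 1, then ((1-c)/(1+c))²·SR(A) ≤ SR(Q(A)) ≤ ((1+c)/(1-c))²·SR(A). -/

import Mathlib

/-- Frobenius norm of a real matrix: the ℓ² norm of all entries. -/
noncomputable def frob {m n : ℕ} (M : Matrix (Fin m) (Fin n) ℝ) : ℝ :=
  Real.sqrt (∑ i, ∑ j, (M i j) ^ 2)

/-- Largest singular value (operator 2-norm) of a real matrix. -/
noncomputable def sMax {m n : ℕ} (M : Matrix (Fin m) (Fin n) ℝ) : ℝ :=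
  ‖(Matrix.toEuclideanLin M).toContinuousLinearMap‖

/-- Stable rank of a matrix. -/
noncomputable def SR {m n : ℕ} (M : Matrix (Fin m) (Fin n) ℝ) : ℝ :=
  frob M ^ 2 / sMax M ^ 2

lemma frob_eq_norm {m n : ℕ} (M : Matrix (Fin m) (Fin n) ℝ) :
    frob M = ‖(WithLp.equiv 2 ((Fin m × Fin n) → ℝ)).symm (fun p => M p.1 p.2)‖ := by
  rw [EuclideanSpace.norm_eq, frob, Fintype.sum_prod_type]
  simp [Real.norm_eq_abs, sq_abs]

lemma frob_nonneg {m n : ℕ} (M : Matrix (Fin m) (Fin n) ℝ) : 0 ≤ frob M := by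
  rw [frob_eq_norm]; exact norm_nonneg _

lemma frob_pos {m n : ℕ} (M : Matrix (Fin m) (Fin n) ℝ) (h : M ≠ 0) : 0 < frob M := by
  rw [frob_eq_norm]
  rw [norm_pos_iff]
  intro h0
  apply h
  ext i j
  have := congrArg (fun v => v (i, j)) h0
  simpa using this

lemma frob_sub_bounds {m n : ℕ} (A ε : Matrix (Fin m) (Fin n) ℝ) :
    frob A - frob ε ≤ frob (A - ε) ∧ frob (A - ε) ≤ frob A + frob ε := by
  have key : (WithLp.equiv 2 ((Fin m × Fin n) → ℝ)).symm (fun p => (A - ε) p.1 p.2)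
      = (WithLp.equiv 2 ((Fin m × Fin n) → ℝ)).symm (fun p => A p.1 p.2)
        - (WithLp.equiv 2 ((Fin m × Fin n) → ℝ)).symm (fun p => ε p.1 p.2) := by
    rfl
  rw [frob_eq_norm, frob_eq_norm, frob_eq_norm, key]
  exact ⟨norm_sub_norm_le _ _, norm_sub_le _ _⟩

lemma sMax_nonneg {m n : ℕ} (M : Matrix (Fin m) (Fin n) ℝ) : 0 ≤ sMax M :=
  norm_nonneg _

lemma sMax_pos {m n : ℕ} (M : Matrix (Fin m) (Fin n) ℝ) (h : M ≠ 0) : 0 < sMax M := by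
  rw [sMax, norm_pos_iff]
  intro h0
  apply h
  have : Matrix.toEuclideanLin M = 0 := by
    apply LinearMap.ext
    intro x
    have h1 := congrFun (congrArg DFunLike.coe h0) x
    simpa using h1
  have := Matrix.toEuclideanLin.injective (by rw [this, map_zero] : Matrix.toEuclideanLin M = Matrix.toEuclideanLin 0)
  exact this

lemma sMax_sub_bounds {m n : ℕ} (A ε : Matrix (Fin m) (Fin n) ℝ) :
    sMax A - sMax ε ≤ sMax (A - ε) ∧ sMax (A - ε) ≤ sMax A + sMax ε := by
  have key : (Matrix.toEuclideanLin (A - ε)).toContinuousLinearMap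
      = (Matrix.toEuclideanLin A).toContinuousLinearMap
        - (Matrix.toEuclideanLin ε).toContinuousLinearMap := by
    ext x
    simp [map_sub]
  rw [sMax, sMax, sMax, key]
  exact ⟨norm_sub_norm_le _ _, norm_sub_le _ _⟩

theorem stable_rank_relative_error
    {m n : ℕ} (A ε : Matrix (Fin m) (Fin n) ℝ) (c : ℝ)
    (hc0 : 0 ≤ c) (hc1 : c < 1) (hA : A ≠ 0)
    (hF : frob ε ≤ c * frob A) (hσ : sMax ε ≤ c * sMax A) :
    ((1 - c) / (1 + c)) ^ 2 * SR A ≤ SR (A - ε) ∧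
      SR (A - ε) ≤ ((1 + c) / (1 - c)) ^ 2 * SR A := by
  set a := frob A with ha
  set s := sMax A with hs
  set a' := frob (A - ε) with ha'
  set s' := sMax (A - ε) with hs'
  have hapos : 0 < a := frob_pos A hA
  have hspos : 0 < s := sMax_pos A hA
  obtain ⟨hf1, hf2⟩ := frob_sub_bounds A ε
  obtain ⟨hg1, hg2⟩ := sMax_sub_bounds A ε
  have hεf : 0 ≤ frob ε := frob_nonneg ε
  have hεs : 0 ≤ sMax ε := sMax_nonneg ε
  have hlo_a : (1 - c) * a ≤ a' := by nlinarith
  have hhi_a : a' ≤ (1 + c) * a := by nlinarith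
  have hlo_s : (1 - c) * s ≤ s' := by nlinarith
  have hhi_s : s' ≤ (1 + c) * s := by nlinarith
  have h1c : 0 < 1 - c := by linarith
  have h1c' : 0 < 1 + c := by linarith
  have hs'pos : 0 < s' := lt_of_lt_of_le (by positivity) hlo_s
  have ha'nonneg : 0 ≤ a' := frob_nonneg _
  constructor
  · have h1 : ((1 - c) * a) ^ 2 / ((1 + c) * s) ^ 2 ≤ a' ^ 2 / s' ^ 2 :=
      div_le_div₀ (sq_nonneg a') (pow_le_pow_left₀ (by positivity) hlo_a 2)
        (by positivity) (pow_le_pow_left₀ hs'pos.le hhi_s 2)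
    have h2 : ((1 - c) / (1 + c)) ^ 2 * (a ^ 2 / s ^ 2)
        = ((1 - c) * a) ^ 2 / ((1 + c) * s) ^ 2 := by
      field_simp
    rw [SR, SR, ← ha, ← hs, ← ha', ← hs', h2]
    exact h1
  · have h1 : a' ^ 2 / s' ^ 2 ≤ ((1 + c) * a) ^ 2 / ((1 - c) * s) ^ 2 :=
      div_le_div₀ (by positivity) (pow_le_pow_left₀ ha'nonneg hhi_a 2)
        (by positivity) (pow_le_pow_left₀ (by positivity) hlo_s 2)
    have h2 : ((1 + c) / (1 - c)) ^ 2 * (a ^ 2 / s ^ 2)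
        = ((1 + c) * a) ^ 2 / ((1 - c) * s) ^ 2 := by
      field_simp
    rw [SR, SR, ← ha, ← hs, ← ha', ← hs', h2]
    exact h1
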